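/- arXiv:2604.16512 — 5 statements merged into one kernel-verified Lean document; each statement's English description precedes it below -/
import Mathlib

section
/- Let d ≥ 1 and let φ : ℝᵈ → ℝ (with ℝᵈ modeled as EuclideanSpace ℝ (Fin d)). Let x ∈ ℝᵈ and assume that φ is C² on a neighborhood of x and that ‖gradient φ y‖ = 1 for all y in some neighborhood of x. Then the gradient vector field of φ is stationary along its own direction at x: the map t ↦ gradient φ (x + t • gradient φ x) from ℝ to ℝᵈ has derivative 0 at t = 0. -/
open Filter

/-!
Differentiating `‖∇φ‖² = 1` shows that the Hessian `H` of `φ` at `x` satisfies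
`H v (∇φ x) = 0` for every `v`. Since `H` is symmetric, `H (∇φ x) = 0`, and by the chain rule
this is the derivative of `t ↦ ∇φ (x + t • ∇φ x)` at `t = 0`.
-/

open InnerProductSpace Topology

theorem ContDiffAt.differentiableAt_fderiv {𝕜 E F : Type*} [NontriviallyNormedField 𝕜]
    [NormedAddCommGroup E] [NormedSpace 𝕜 E] [NormedAddCommGroup F] [NormedSpace 𝕜 F]
    {f : E → F} {x : E} {n : WithTop ℕ∞} (hf : ContDiffAt 𝕜 n f x) (hn : 2 ≤ n) :
    DifferentiableAt 𝕜 (fderiv 𝕜 f) x :=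
  (hf.fderiv_right (m := 1) hn).differentiableAt one_ne_zero

section

variable {E F : Type*} [NormedAddCommGroup E] [InnerProductSpace ℝ E]
  [NormedAddCommGroup F] [InnerProductSpace ℝ F]

theorem HasFDerivAt.inner_apply_eq_zero_of_eventually_norm_eq {g : E → F} {g' : E →L[ℝ] F}
    {x : E} {c : ℝ} (hg : HasFDerivAt g g' x) (hc : ∀ᶠ y in 𝓝 x, ‖g y‖ = c) (v : E) :
    ⟪g x, g' v⟫_ℝ = 0 := by
  have hconst : HasFDerivAt (‖g ·‖ ^ 2) (0 : E →L[ℝ] ℝ) x :=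
    (hasFDerivAt_const (c ^ 2) x).congr_of_eventuallyEq (by filter_upwards [hc] with y hy; rw [hy])
  simpa using congr($(hg.norm_sq.unique hconst) v)

variable [CompleteSpace E] {φ : E → ℝ} {x : E}

theorem hasFDerivAt_gradient (h : DifferentiableAt ℝ (fderiv ℝ φ) x) :
    HasFDerivAt (gradient φ)
      ((toDual ℝ E).symm.toContinuousLinearEquiv.toContinuousLinearMap ∘L
        fderiv ℝ (fderiv ℝ φ) x) x :=
  (toDual ℝ E).symm.toContinuousLinearEquiv.hasFDerivAt.comp x h.hasFDerivAt

theorem inner_fderiv_gradient_apply (h : DifferentiableAt ℝ (fderiv ℝ φ) x) (v w : E) :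
    ⟪fderiv ℝ (gradient φ) x v, w⟫_ℝ = fderiv ℝ (fderiv ℝ φ) x v w := by
  rw [(hasFDerivAt_gradient h).fderiv]
  exact toDual_symm_apply

theorem ContDiffAt.differentiableAt_gradient (hφ : ContDiffAt ℝ 2 φ x) :
    DifferentiableAt ℝ (gradient φ) x :=
  (hasFDerivAt_gradient (hφ.differentiableAt_fderiv le_rfl)).differentiableAt

theorem fderiv_gradient_apply_gradient_eq_zero {c : ℝ} (hφ : ContDiffAt ℝ 2 φ x)
    (hc : ∀ᶠ y in 𝓝 x, ‖gradient φ y‖ = c) :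
    fderiv ℝ (gradient φ) x (gradient φ x) = 0 := by
  have hdiff := hφ.differentiableAt_fderiv le_rfl
  refine ext_inner_right ℝ fun v => ?_
  rw [inner_fderiv_gradient_apply hdiff, hφ.isSymmSndFDerivAt (by simp),
    ← inner_fderiv_gradient_apply hdiff, real_inner_comm, inner_zero_left]
  exact hφ.differentiableAt_gradient.hasFDerivAt.inner_apply_eq_zero_of_eventually_norm_eq hc v

end

theorem gradient_stationary_along_gradient_ray_general
    (d : ℕ)
    (φ : EuclideanSpace ℝ (Fin d) → ℝ) (x : EuclideanSpace ℝ (Fin d))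
    (hC2 : ContDiffAt ℝ 2 φ x)
    (heik : ∀ᶠ y in nhds x, ‖gradient φ y‖ = 1) :
    HasDerivAt (fun t : ℝ => gradient φ (x + t • gradient φ x))
      (0 : EuclideanSpace ℝ (Fin d)) 0 := by
  have hline : HasDerivAt (fun t : ℝ => x + t • gradient φ x) (gradient φ x) 0 := by
    simpa using ((hasDerivAt_id (0 : ℝ)).smul_const (gradient φ x)).const_add x
  have hgrad : HasFDerivAt (gradient φ) (fderiv ℝ (gradient φ) x)
      (x + (0 : ℝ) • gradient φ x) := by
    rw [zero_smul, add_zero]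
    exact hC2.differentiableAt_gradient.hasFDerivAt
  have hcomp := hgrad.comp_hasDerivAt 0 hline
  rwa [fderiv_gradient_apply_gradient_eq_zero hC2 heik] at hcomp

/-- If `φ` is `C²` near `x` and solves the eikonal equation `‖∇φ‖ = 1` near `x`,
then the gradient vector field of `φ` is stationary along its own direction at `x`. -/
theorem gradient_stationary_along_gradient_ray
    (d : ℕ) (hd : 1 ≤ d)
    (φ : EuclideanSpace ℝ (Fin d) → ℝ) (x : EuclideanSpace ℝ (Fin d))
    (hC2 : ContDiffAt ℝ 2 φ x)
    (heik : ∀ᶠ y in nhds x, ‖gradient φ y‖ = 1) :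
    HasDerivAt (fun t : ℝ => gradient φ (x + t • gradient φ x))
      (0 : EuclideanSpace ℝ (Fin d)) 0 :=
  gradient_stationary_along_gradient_ray_general d φ x hC2 heik
end

section
/- Let d ≥ 1, let S ⊆ ℝᵈ be a nonempty closed set, and let x ∈ ℝᵈ with x ∉ S. If the distance function f : ℝᵈ → ℝ, f(y) = Metric.infDist y S, is differentiable at x, then ‖fderiv ℝ f x‖ = 1. -/
/-!
The distance function is 1-Lipschitz, so its derivative has norm at most one. Conversely, if `z`
is a nearest point of `S` to `x` (it exists since closed balls are compact), then along the segment
from `x` to `z` the distance equals `(1 - t) * dist x z`; differentiating at `t = 0` from the right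
gives `L (z - x) = -‖z - x‖` for the derivative `L`, so `‖L‖ ≥ 1`.
-/

open Metric AffineMap Set Filter Topology

section NormedSpace

variable {E : Type*} [NormedAddCommGroup E] [NormedSpace ℝ E] {S : Set E} {x z : E}

theorem Metric.infDist_lineMap_of_infDist_eq_dist (hz : z ∈ S) (hxz : infDist x S = dist x z)
    {t : ℝ} (ht₀ : 0 ≤ t) (ht₁ : t ≤ 1) :
    infDist (lineMap x z t) S = (1 - t) * infDist x S := by
  apply le_antisymm
  · calc infDist (lineMap x z t) S ≤ dist (lineMap x z t) z := infDist_le_dist_of_mem hz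
      _ = (1 - t) * infDist x S := by
        rw [dist_lineMap_right, hxz, Real.norm_of_nonneg (sub_nonneg.2 ht₁)]
  · have := infDist_le_infDist_add_dist (x := x) (y := lineMap x z t) (s := S)
    rw [dist_left_lineMap, ← hxz, Real.norm_of_nonneg ht₀] at this
    linarith

theorem Metric.apply_sub_eq_neg_infDist_of_hasFDerivAt {L : E →L[ℝ] ℝ}
    (hL : HasFDerivAt (infDist · S) L x) (hz : z ∈ S) (hxz : infDist x S = dist x z) :
    L (z - x) = -infDist x S := by
  have hline : HasDerivWithinAt (fun t : ℝ ↦ infDist (lineMap x z t) S) (L (z - x)) (Ici 0) 0 :=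
    (hL.comp_hasDerivAt_of_eq 0 hasDerivAt_lineMap (lineMap_apply_zero x z).symm).hasDerivWithinAt
  have hseg : (fun t : ℝ ↦ infDist (lineMap x z t) S) =ᶠ[𝓝[≥] 0] fun t ↦ (1 - t) * infDist x S :=
    eventually_of_mem (Icc_mem_nhdsGE zero_lt_one) fun t ht ↦
      infDist_lineMap_of_infDist_eq_dist hz hxz ht.1 ht.2
  have haff : HasDerivWithinAt (fun t : ℝ ↦ (1 - t) * infDist x S) (-infDist x S) (Ici 0) 0 := by
    simpa using ((hasDerivAt_id (0 : ℝ)).const_sub 1).mul_const (infDist x S) |>.hasDerivWithinAt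
  exact (uniqueDiffOn_Ici 0 0 self_mem_Ici).eq_deriv _
    (hline.congr_of_eventuallyEq hseg.symm (by simp)) haff

theorem Metric.one_le_norm_of_hasFDerivAt_infDist {L : E →L[ℝ] ℝ}
    (hL : HasFDerivAt (infDist · S) L x) (hx : x ∉ S) (hz : z ∈ S)
    (hxz : infDist x S = dist x z) : 1 ≤ ‖L‖ := by
  have hpos : 0 < ‖z - x‖ := norm_pos_iff.2 (sub_ne_zero.2 (ne_of_mem_of_not_mem hz hx))
  have : ‖z - x‖ ≤ ‖L‖ * ‖z - x‖ := by
    calc ‖z - x‖ = ‖L (z - x)‖ := by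
          rw [apply_sub_eq_neg_infDist_of_hasFDerivAt hL hz hxz, norm_neg, hxz, dist_eq_norm',
            norm_norm]
      _ ≤ ‖L‖ * ‖z - x‖ := L.le_opNorm _
  exact le_of_mul_le_mul_right (by simpa using this) hpos

theorem IsClosed.norm_fderiv_infDist_eq_one [ProperSpace E] (hScl : IsClosed S) (hS : S.Nonempty)
    (hx : x ∉ S) (hdiff : DifferentiableAt ℝ (infDist · S) x) :
    ‖fderiv ℝ (infDist · S) x‖ = 1 := by
  obtain ⟨z, hz, hxz⟩ := hScl.exists_infDist_eq_dist hS x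
  refine le_antisymm ?_ (one_le_norm_of_hasFDerivAt_infDist hdiff.hasFDerivAt hx hz hxz)
  simpa using hdiff.hasFDerivAt.le_of_lipschitz (lipschitz_infDist_pt S)

end NormedSpace

/-- At any point of differentiability outside a nonempty closed set `S`,
the distance function to `S` has derivative of norm one (eikonal equation). -/
theorem norm_fderiv_infDist_eq_one
    (d : ℕ)
    (S : Set (EuclideanSpace ℝ (Fin d))) (hS : S.Nonempty) (hScl : IsClosed S)
    (x : EuclideanSpace ℝ (Fin d)) (hx : x ∉ S)
    (hdiff : DifferentiableAt ℝ (fun y => Metric.infDist y S) x) :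
    ‖fderiv ℝ (fun y => Metric.infDist y S) x‖ = 1 :=
  hScl.norm_fderiv_infDist_eq_one hS hx hdiff
end

section
/- Let d ≥ 1, let S ⊆ ℝᵈ be a nonempty closed set, let x ∈ ℝᵈ with x ∉ S, and let p ∈ S be a nearest point of x in S, i.e. ‖x − p‖ = Metric.infDist x S. If the distance function f : ℝᵈ → ℝ, f(y) = Metric.infDist y S, is differentiable at x, then its gradient at x equals the unit vector pointing from p to x: gradient f x = (‖x − p‖)⁻¹ • (x − p). In particular, the nearest point p is unique. -/
/-!
The distance function `f = infDist · S` lies below `y ↦ ‖y - p‖` and touches it at `x`, so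
`‖· - p‖ - f` has a local minimum at `x`. Both functions being differentiable there (the norm
because `x ≠ p`), their gradients coincide, and the gradient of `‖· - p‖` at `x` is the unit
vector from `p` to `x`. Two nearest points would thus give the same unit vector at the same
distance, hence coincide.
-/

open Metric Filter Topology InnerProductSpace

theorem HasFDerivAt.eq_of_eventuallyLE_of_eq {E : Type*} [NormedAddCommGroup E] [NormedSpace ℝ E]
    {f g : E → ℝ} {f' g' : E →L[ℝ] ℝ} {x : E} (hf : HasFDerivAt f f' x) (hg : HasFDerivAt g g' x)
    (hle : f ≤ᶠ[𝓝 x] g) (heq : f x = g x) : f' = g' := by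
  have hmin : IsLocalMin (g - f) x := by
    filter_upwards [hle] with y hy
    simp only [Pi.sub_apply, heq, sub_self, sub_nonneg, hy]
  exact (sub_eq_zero.1 (hmin.hasFDerivAt_eq_zero (hg.sub hf))).symm

section InnerProductSpace

variable {E : Type*} [NormedAddCommGroup E] [InnerProductSpace ℝ E] [CompleteSpace E]

theorem hasGradientAt_norm_sub {x p : E} (hxp : x ≠ p) :
    HasGradientAt (fun y => ‖y - p‖) (‖x - p‖⁻¹ • (x - p)) x := by
  have hne : ‖x - p‖ ^ 2 ≠ 0 := pow_ne_zero 2 (norm_ne_zero_iff.2 (sub_ne_zero.2 hxp))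
  have h := ((hasFDerivAt_id x).sub_const p).norm_sq.sqrt hne
  simp only [id, Real.sqrt_sq (norm_nonneg _)] at h
  refine hasGradientAt_iff_hasFDerivAt.2 (h.congr_fderiv ?_)
  ext y
  simp [field]

theorem gradient_infDist_eq_of_norm_sub_eq_infDist {S : Set E} {x p : E} (hxp : x ≠ p)
    (hp : p ∈ S) (hnear : ‖x - p‖ = infDist x S) (hdiff : DifferentiableAt ℝ (infDist · S) x) :
    gradient (infDist · S) x = ‖x - p‖⁻¹ • (x - p) := by
  have hf := hasGradientAt_iff_hasFDerivAt.1 hdiff.hasGradientAt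
  have hg := hasGradientAt_iff_hasFDerivAt.1 (hasGradientAt_norm_sub hxp)
  refine (toDual ℝ E).injective (hf.eq_of_eventuallyLE_of_eq hg ?_ hnear.symm)
  exact Eventually.of_forall fun y => (infDist_le_dist_of_mem hp).trans_eq (dist_eq_norm y p)

end InnerProductSpace

theorem gradient_infDist_eq_unit_vector_general
    (d : ℕ)
    (S : Set (EuclideanSpace ℝ (Fin d)))
    (x : EuclideanSpace ℝ (Fin d)) (hx : x ∉ S)
    (p : EuclideanSpace ℝ (Fin d)) (hp : p ∈ S)
    (hnear : ‖x - p‖ = Metric.infDist x S)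
    (hdiff : DifferentiableAt ℝ (fun y => Metric.infDist y S) x) :
    gradient (fun y => Metric.infDist y S) x = (‖x - p‖)⁻¹ • (x - p) ∧
      ∀ q ∈ S, ‖x - q‖ = Metric.infDist x S → q = p := by
  have hxp : x ≠ p := fun h => hx (h ▸ hp)
  have hgp := gradient_infDist_eq_of_norm_sub_eq_infDist hxp hp hnear hdiff
  refine ⟨hgp, fun q hq hnq => ?_⟩
  have hgq := gradient_infDist_eq_of_norm_sub_eq_infDist (fun h : x = q => hx (h ▸ hq)) hq hnq hdiff
  rw [hgp, hnq, ← hnear] at hgq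
  have hne : ‖x - p‖⁻¹ ≠ 0 := inv_ne_zero (norm_ne_zero_iff.2 (sub_ne_zero.2 hxp))
  exact sub_right_injective (smul_right_injective _ hne hgq.symm)

/-- If the distance function to a nonempty closed set `S` is differentiable at
`x ∉ S`, and `p ∈ S` is a nearest point of `x` in `S`, then the gradient of the
distance function at `x` is the unit vector pointing from `p` to `x`; in particular,
the nearest point is unique. -/
theorem gradient_infDist_eq_unit_vector
    (d : ℕ) (hd : 1 ≤ d)
    (S : Set (EuclideanSpace ℝ (Fin d))) (hS : S.Nonempty) (hScl : IsClosed S)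
    (x : EuclideanSpace ℝ (Fin d)) (hx : x ∉ S)
    (p : EuclideanSpace ℝ (Fin d)) (hp : p ∈ S)
    (hnear : ‖x - p‖ = Metric.infDist x S)
    (hdiff : DifferentiableAt ℝ (fun y => Metric.infDist y S) x) :
    gradient (fun y => Metric.infDist y S) x = (‖x - p‖)⁻¹ • (x - p) ∧
      ∀ q ∈ S, ‖x - q‖ = Metric.infDist x S → q = p :=
  gradient_infDist_eq_unit_vector_general d S x hx p hp hnear hdiff
end

section
/- Let d ≥ 1, let S ⊆ ℝᵈ be a nonempty closed set, and let x ∈ ℝᵈ with x ∉ S. If there exist two distinct points p, q ∈ S with ‖x − p‖ = ‖x − q‖ = Metric.infDist x S, then the distance function f : ℝᵈ → ℝ, f(y) = Metric.infDist y S, is not differentiable at x. -/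
/-!
Let `f = infDist · S` and let `p ∈ S` realise `f x`. Since `f y ≤ ‖y - p‖` everywhere with equality
at `y = x`, the point `x` maximises `f² - ‖· - p‖²`, so a derivative `L` of `f` at `x` satisfies
`f x • L = innerSL ℝ (x - p)`. The left side does not depend on `p`, and `innerSL` is injective,
so a differentiability point has at most one nearest point.
-/

open Metric

theorem isMaxOn_sq_infDist_sub_sq_norm_sub {E : Type*} [SeminormedAddCommGroup E] {S : Set E}
    {x p : E} (hp : p ∈ S) (hnear : ‖x - p‖ = infDist x S) :
    IsMaxOn (fun y => infDist y S ^ 2 - ‖y - p‖ ^ 2) Set.univ x := by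
  intro y _
  have hy : infDist y S ≤ ‖y - p‖ := dist_eq_norm y p ▸ infDist_le_dist_of_mem hp
  simp only [Set.mem_ofPred_eq, ← hnear, sub_self]
  nlinarith [infDist_nonneg (x := y) (s := S)]

theorem HasFDerivAt.infDist_smul_eq_innerSL {F : Type*} [NormedAddCommGroup F]
    [InnerProductSpace ℝ F] {S : Set F} {x p : F} {L : F →L[ℝ] ℝ}
    (hf : HasFDerivAt (fun y => infDist y S) L x) (hp : p ∈ S)
    (hnear : ‖x - p‖ = infDist x S) :
    infDist x S • L = innerSL ℝ (x - p) := by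
  have hg : HasFDerivAt (fun y => infDist y S ^ 2 - ‖y - p‖ ^ 2)
      ((2 : ℝ) • (infDist x S • L - innerSL ℝ (x - p))) x := by
    refine ((hf.pow 2).sub ((hasFDerivAt_id x).sub_const p).norm_sq).congr_fderiv ?_
    ext v
    simp only [Nat.add_one_sub_one, pow_one, nsmul_eq_mul, Nat.cast_ofNat, id_eq,
      ContinuousLinearMap.comp_id, sub_apply, smul_apply, smul_eq_mul,
      coe_innerSL_apply]
    ring
  have hzero := ((isMaxOn_sq_infDist_sub_sq_norm_sub hp hnear).isLocalMax
    Filter.univ_mem).hasFDerivAt_eq_zero hg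
  exact sub_eq_zero.mp ((smul_eq_zero.mp hzero).resolve_left two_ne_zero)

theorem not_differentiableAt_infDist_of_two_nearest_points_general
    (d : ℕ)
    (S : Set (EuclideanSpace ℝ (Fin d)))
    (x : EuclideanSpace ℝ (Fin d))
    (p q : EuclideanSpace ℝ (Fin d)) (hp : p ∈ S) (hq : q ∈ S) (hpq : p ≠ q)
    (hnearp : ‖x - p‖ = Metric.infDist x S)
    (hnearq : ‖x - q‖ = Metric.infDist x S) :
    ¬ DifferentiableAt ℝ (fun y => Metric.infDist y S) x := by
  intro hf
  have hxp := hf.hasFDerivAt.infDist_smul_eq_innerSL hp hnearp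
  have hxq := hf.hasFDerivAt.infDist_smul_eq_innerSL hq hnearq
  exact hpq (sub_right_injective (innerSL_inj.mp (hxp.symm.trans hxq)))

/-- If a point `x` outside a nonempty closed set `S` has two distinct nearest points
in `S`, then the distance function to `S` is not differentiable at `x`. -/
theorem not_differentiableAt_infDist_of_two_nearest_points
    (d : ℕ) (hd : 1 ≤ d)
    (S : Set (EuclideanSpace ℝ (Fin d))) (hS : S.Nonempty) (hScl : IsClosed S)
    (x : EuclideanSpace ℝ (Fin d)) (hx : x ∉ S)
    (p q : EuclideanSpace ℝ (Fin d)) (hp : p ∈ S) (hq : q ∈ S) (hpq : p ≠ q)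
    (hnearp : ‖x - p‖ = Metric.infDist x S)
    (hnearq : ‖x - q‖ = Metric.infDist x S) :
    ¬ DifferentiableAt ℝ (fun y => Metric.infDist y S) x :=
  not_differentiableAt_infDist_of_two_nearest_points_general d S x p q hp hq hpq hnearp hnearq
end

section
/- Let ε > 0 and b ≥ 0, and define v : ℝ → ℝ by v(s) = 0 if |s| ≤ b and v(s) = 1 − exp((b − |s|)/(2ε)) if |s| > b. Then the one-dimensional Ambrosio–Tortorelli energy of v satisfies ∫_{ℝ} ( ε * (v'(s))² + (1/(4ε)) * (v(s) − 1)² ) ds = 1 + b/(2ε), where v'(s) denotes the derivative of v, which exists for all s with |s| ≠ b (namely v'(s) = sgn(s) * (1/(2ε)) * exp((b − |s|)/(2ε)) for |s| > b and v'(s) = 0 for |s| < b). In particular, if b = b_ε with b_ε/ε → 0 as ε → 0, the energy converges to 1. -/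
/-!
The profile is radial, `v s = p |s|`, so the energy is twice the integral of the one-sided
density over `(0, ∞)`. On the tube `[0, b]` only the potential term contributes, `1/(4ε)` per unit
length. Outside it `p` satisfies the equipartition identity `ε p'² = (1 - p)²/(4ε)`, so the density
is `exp((b - t)/ε)/(2ε)`, whose integral over `(b, ∞)` is `1/2`.
-/

open MeasureTheory Real Set Filter Topology

lemma hasDerivAt_abs_sign {s : ℝ} (hs : s ≠ 0) : HasDerivAt (|·|) (Real.sign s) s := by
  rcases hs.lt_or_gt with hs | hs
  · simpa [Real.sign_of_neg hs] using hasDerivAt_abs_neg hs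
  · simpa [Real.sign_of_pos hs] using hasDerivAt_abs_pos hs

lemma HasDerivAt.comp_abs {f : ℝ → ℝ} {f' s : ℝ} (hf : HasDerivAt f f' |s|) (hs : s ≠ 0) :
    HasDerivAt (fun x => f |x|) (Real.sign s * f') s := by
  rw [mul_comm]
  exact hf.comp s (hasDerivAt_abs_sign hs)

lemma exp_sub_div_eq_mul (b t ε : ℝ) : exp ((b - t) / ε) = exp (b / ε) * exp (-ε⁻¹ * t) := by
  rw [← exp_add]; ring_nf

lemma integrableOn_Ioi_exp_sub_div {ε : ℝ} (hε : 0 < ε) (b : ℝ) :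
    IntegrableOn (fun t => exp ((b - t) / ε)) (Ioi b) := by
  simp_rw [exp_sub_div_eq_mul]
  exact (integrableOn_exp_mul_Ioi (neg_lt_zero.2 (inv_pos.2 hε)) b).const_mul _

lemma integral_Ioi_exp_sub_div {ε : ℝ} (hε : 0 < ε) (b : ℝ) :
    ∫ t in Ioi b, exp ((b - t) / ε) = ε := by
  simp_rw [exp_sub_div_eq_mul]
  rw [integral_const_mul, integral_exp_mul_Ioi (neg_lt_zero.2 (inv_pos.2 hε)), neg_div_neg_eq,
    mul_div_assoc', ← exp_add]
  field_simp
  simp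

noncomputable section

namespace AmbrosioTortorelli

variable {ε b t : ℝ}

def profile (ε b t : ℝ) : ℝ := if t ≤ b then 0 else 1 - exp ((b - t) / (2 * ε))

def profileDeriv (ε b t : ℝ) : ℝ := if b < t then 1 / (2 * ε) * exp ((b - t) / (2 * ε)) else 0

def energyDensity (ε b t : ℝ) : ℝ :=
  ε * profileDeriv ε b t ^ 2 + 1 / (4 * ε) * (profile ε b t - 1) ^ 2

lemma profile_of_le (h : t ≤ b) : profile ε b t = 0 := if_pos h

lemma profile_of_gt (h : b < t) : profile ε b t = 1 - exp ((b - t) / (2 * ε)) := if_neg h.not_ge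

lemma profileDeriv_of_le (h : t ≤ b) : profileDeriv ε b t = 0 := if_neg h.not_gt

lemma profileDeriv_of_gt (h : b < t) :
    profileDeriv ε b t = 1 / (2 * ε) * exp ((b - t) / (2 * ε)) := if_pos h

lemma hasDerivAt_profile_of_gt (h : b < t) : HasDerivAt (profile ε b) (profileDeriv ε b t) t := by
  have hlocal : (fun x => 1 - exp ((b - x) / (2 * ε))) =ᶠ[𝓝 t] profile ε b := by
    filter_upwards [eventually_gt_nhds h] with x hx
    rw [profile_of_gt hx]
  rw [profileDeriv_of_gt h]
  refine (((((hasDerivAt_id' t).const_sub b).div_const (2 * ε)).exp.const_sub 1).congr_deriv ?_)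
    |>.congr_of_eventuallyEq hlocal.symm
  ring

lemma hasDerivAt_profile_abs (hb : 0 ≤ b) {s : ℝ} (hs : |s| ≠ b) :
    HasDerivAt (fun x => profile ε b |x|) (Real.sign s * profileDeriv ε b |s|) s := by
  rcases hs.lt_or_gt with hs | hs
  · have hzero : (fun x => profile ε b |x|) =ᶠ[𝓝 s] fun _ => 0 := by
      filter_upwards [(isOpen_lt continuous_abs continuous_const).mem_nhds hs] with x hx
      exact profile_of_le hx.le
    rw [profileDeriv_of_le hs.le, mul_zero]
    exact (hasDerivAt_const s 0).congr_of_eventuallyEq hzero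
  · have hs0 : s ≠ 0 := by rintro rfl; exact (hb.trans_lt hs).ne' abs_zero
    exact (hasDerivAt_profile_of_gt hs).comp_abs hs0

lemma sq_sign_mul_profileDeriv_abs (hb : 0 ≤ b) (s : ℝ) :
    (Real.sign s * profileDeriv ε b |s|) ^ 2 = profileDeriv ε b |s| ^ 2 := by
  rcases eq_or_ne s 0 with rfl | hs
  · simp [profileDeriv_of_le hb]
  · rcases Real.sign_apply_eq_of_ne_zero s hs with h | h <;> simp [h]

lemma energyDensity_of_le (h : t ≤ b) : energyDensity ε b t = 1 / (4 * ε) := by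
  simp [energyDensity, profile_of_le h, profileDeriv_of_le h]

lemma energyDensity_of_gt (hε : ε ≠ 0) (h : b < t) :
    energyDensity ε b t = exp ((b - t) / ε) / (2 * ε) := by
  have hsq : exp ((b - t) / (2 * ε)) ^ 2 = exp ((b - t) / ε) := by
    rw [sq, ← exp_add]; congr 1; field_simp; ring
  rw [energyDensity, profile_of_gt h, profileDeriv_of_gt h, ← hsq]
  field_simp
  ring

lemma integral_energyDensity_Ioi (hε : 0 < ε) (hb : 0 ≤ b) :
    ∫ t in Ioi 0, energyDensity ε b t = b / (4 * ε) + 1 / 2 := by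
  have hcore : EqOn (energyDensity ε b) (fun _ => 1 / (4 * ε)) (Ioc 0 b) :=
    fun t ht => energyDensity_of_le ht.2
  have htail : EqOn (energyDensity ε b) (fun t => exp ((b - t) / ε) / (2 * ε)) (Ioi b) :=
    fun t ht => energyDensity_of_gt hε.ne' ht
  have hcore_int : IntegrableOn (energyDensity ε b) (Ioc 0 b) :=
    (integrableOn_const measure_Ioc_lt_top.ne).congr_fun hcore.symm measurableSet_Ioc
  have htail_int : IntegrableOn (energyDensity ε b) (Ioi b) :=
    IntegrableOn.congr_fun ((integrableOn_Ioi_exp_sub_div hε b).div_const _) htail.symm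
      measurableSet_Ioi
  rw [← Ioc_union_Ioi_eq_Ioi hb,
    setIntegral_union (Ioc_disjoint_Ioi le_rfl) measurableSet_Ioi hcore_int htail_int,
    setIntegral_congr_fun measurableSet_Ioc hcore, setIntegral_congr_fun measurableSet_Ioi htail,
    setIntegral_const, integral_div, integral_Ioi_exp_sub_div hε]
  simp [hb]
  field_simp

end AmbrosioTortorelli

end

open AmbrosioTortorelli in
/-- The one-dimensional Ambrosio–Tortorelli energy of the optimal transition profile
`v(s) = 0` for `|s| ≤ b` and `v(s) = 1 - exp((b - |s|)/(2ε))` for `|s| > b` equals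
`1 + b/(2ε)`; here `v' ` exists for all `|s| ≠ b` and is given by
`v'(s) = sgn(s) (1/(2ε)) exp((b - |s|)/(2ε))` for `|s| > b` and `v'(s) = 0` for `|s| < b`. -/
theorem ambrosioTortorelli_profile_energy
    (ε b : ℝ) (hε : 0 < ε) (hb : 0 ≤ b)
    (v dv : ℝ → ℝ)
    (hv : ∀ s, v s = if |s| ≤ b then 0 else 1 - Real.exp ((b - |s|) / (2 * ε)))
    (hdv : ∀ s, dv s =
      if |s| < b then 0
      else if b < |s| then Real.sign s * (1 / (2 * ε)) * Real.exp ((b - |s|) / (2 * ε))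
      else 0) :
    (∀ s : ℝ, |s| ≠ b → HasDerivAt v (dv s) s) ∧
    ∫ s : ℝ, (ε * (dv s) ^ 2 + (1 / (4 * ε)) * (v s - 1) ^ 2) = 1 + b / (2 * ε) := by
  have hv' : v = fun s => profile ε b |s| := funext hv
  have hdv' : dv = fun s => Real.sign s * profileDeriv ε b |s| := by
    funext s
    rw [hdv, profileDeriv]
    split_ifs <;> first | (exfalso; linarith) | ring
  subst hv' hdv'
  refine ⟨fun s hs => hasDerivAt_profile_abs hb hs, ?_⟩
  calc ∫ s, (ε * (Real.sign s * profileDeriv ε b |s|) ^ 2 + 1 / (4 * ε) * (profile ε b |s| - 1) ^ 2)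
      = ∫ s, energyDensity ε b |s| := by simp_rw [energyDensity, sq_sign_mul_profileDeriv_abs hb]
    _ = 2 * ∫ t in Ioi 0, energyDensity ε b t := integral_comp_abs
    _ = 1 + b / (2 * ε) := by
      rw [integral_energyDensity_Ioi hε hb]
      field_simp
      ring
end
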